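/- Let (x, y) be a T-periodic solution of the system x' = a·x − b·x·y, y' = −c·y + d·x² − f(t) with x(t) > 0 for all t. Then for all t: √(ac/(bd))·exp(−(√T/2)·(b/c)·‖f‖₂) ≤ x(t) ≤ √(ac/(bd))·exp((√T/2)·(b/c)·‖f‖₂). -/

import Mathlib

/-!
The growth rate `u = a - b y` of the prey is the derivative of `log x`, so `log x` oscillates by at
most half of `∫₀ᵀ |u|`. Along the forced system the energy
`(a - b y)² / 2 + b d x² / 2 - a c log x` has derivative `b f u - c u²`; periodicity makes its mean
vanish, and Cauchy–Schwarz then gives `c ‖u‖₂ ≤ b ‖f‖₂`, hence `∫₀ᵀ |u| ≤ √T (b / c) ‖f‖₂`.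
Finally the means of `x' / x` and `y'` vanish, which forces the mean of `b d x² - a c` to vanish,
so `x` takes the value `√(a c / (b d))` somewhere.
-/

open MeasureTheory intervalIntegral Real

theorem sq_intervalIntegral_mul_le {f g : ℝ → ℝ} {a b : ℝ} (hab : a ≤ b) (hf : Continuous f)
    (hg : Continuous g) :
    (∫ t in a..b, f t * g t) ^ 2 ≤ (∫ t in a..b, f t ^ 2) * ∫ t in a..b, g t ^ 2 := by
  have hquad : ∀ s : ℝ, 0 ≤ (∫ t in a..b, f t ^ 2) * (s * s)
      + (-2 * ∫ t in a..b, f t * g t) * s + ∫ t in a..b, g t ^ 2 := by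
    intro s
    have hexpand : ∫ t in a..b, (s * f t - g t) ^ 2 = (∫ t in a..b, f t ^ 2) * (s * s)
        + (-2 * ∫ t in a..b, f t * g t) * s + ∫ t in a..b, g t ^ 2 := by
      have hpt : (fun t => (s * f t - g t) ^ 2)
          = fun t => (s * s) * f t ^ 2 - (2 * s) * (f t * g t) + g t ^ 2 := by
        funext t; ring
      rw [hpt, intervalIntegral.integral_add, intervalIntegral.integral_sub,
        intervalIntegral.integral_const_mul, intervalIntegral.integral_const_mul]
      · ring
      all_goals exact Continuous.intervalIntegrable (by fun_prop) _ _
    exact hexpand ▸ integral_nonneg hab fun t _ => sq_nonneg _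
  have hdisc := discrim_le_zero hquad
  rw [discrim] at hdisc
  linarith

theorem Real.mul_exp_neg_le_and_le_mul_exp_of_abs_log_sub_le {p q B : ℝ} (hp : 0 < p)
    (hq : 0 < q) (h : |log p - log q| ≤ B) : q * exp (-B) ≤ p ∧ p ≤ q * exp B := by
  obtain ⟨hlow, hup⟩ := abs_le.mp h
  rw [← exp_log hp, ← exp_log hq, ← exp_add, ← exp_add]
  exact ⟨exp_le_exp.mpr (by linarith), exp_le_exp.mpr (by linarith)⟩

namespace Function.Periodic

variable {F g : ℝ → ℝ} {T : ℝ}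

theorem periodic_of_hasDerivAt (hF : Periodic F T) (hderiv : ∀ t, HasDerivAt F (g t) t) :
    Periodic g T := by
  intro t
  have hshift := (hderiv (t + T)).comp_add_const t T
  rw [show (fun s => F (s + T)) = F from funext hF] at hshift
  exact hshift.unique (hderiv t)

theorem intervalIntegral_eq_zero_of_hasDerivAt (hF : Periodic F T)
    (hderiv : ∀ t, HasDerivAt F (g t) t) (hg : IntervalIntegrable g volume 0 T) :
    ∫ t in (0 : ℝ)..T, g t = 0 := by
  rw [integral_eq_sub_of_hasDerivAt (fun t _ => hderiv t) hg, sub_eq_zero]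
  simpa using hF 0

/-- Going once around a period, `F` must travel from `F t` to `F s` and back. -/
theorem two_mul_abs_sub_le_intervalIntegral_abs (hT : 0 < T) (hF : Periodic F T)
    (hderiv : ∀ t, HasDerivAt F (g t) t) (hg : Continuous g) (s t : ℝ) :
    2 * |F s - F t| ≤ ∫ r in (0 : ℝ)..T, |g r| := by
  have habs : ∀ v w, v ≤ w → |F w - F v| ≤ ∫ r in v..w, |g r| := fun v w hvw => by
    rw [← integral_eq_sub_of_hasDerivAt (fun r _ => hderiv r) (hg.intervalIntegrable v w)]
    exact abs_integral_le_integral_abs hvw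
  obtain ⟨s', hs', hFs'⟩ : ∃ s' ∈ Set.Ico t (t + T), F s' = F s :=
    ⟨toIcoMod hT t s, toIcoMod_mem_Ico hT t s, by
      rw [← self_sub_toIcoDiv_zsmul hT t s]
      exact hF.sub_zsmul_eq _⟩
  calc 2 * |F s - F t| = |F s' - F t| + |F (t + T) - F s'| := by
        rw [hFs', hF t, abs_sub_comm (F t)]; ring
    _ ≤ (∫ r in t..s', |g r|) + ∫ r in s'..t + T, |g r| :=
        add_le_add (habs _ _ hs'.1) (habs _ _ hs'.2.le)
    _ = ∫ r in t..t + T, |g r| :=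
        integral_add_adjacent_intervals (hg.abs.intervalIntegrable _ _)
          (hg.abs.intervalIntegrable _ _)
    _ = ∫ r in (0 : ℝ)..T, |g r| := by
        simpa using ((hF.periodic_of_hasDerivAt hderiv).comp (|·|)).intervalIntegral_add_eq t 0

end Function.Periodic

namespace LotkaVolterra

variable {a b c d T : ℝ} {f x y : ℝ → ℝ}

theorem hasDerivAt_log {t : ℝ} (hx : HasDerivAt x (a * x t - b * x t * y t) t) (hxt : x t ≠ 0) :
    HasDerivAt (fun s => log (x s)) (a - b * y t) t := by
  convert hx.log hxt using 1
  field_simp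

noncomputable def energy (a b c d : ℝ) (x y : ℝ → ℝ) (t : ℝ) : ℝ :=
  (a - b * y t) ^ 2 / 2 + b * d * x t ^ 2 / 2 - a * c * log (x t)

theorem hasDerivAt_energy {t : ℝ} (hx : HasDerivAt x (a * x t - b * x t * y t) t)
    (hy : HasDerivAt y (-c * y t + d * x t ^ 2 - f t) t) (hxt : x t ≠ 0) :
    HasDerivAt (energy a b c d x y)
      (b * (f t * (a - b * y t)) - c * (a - b * y t) ^ 2) t := by
  have hu := (hy.const_mul b).const_sub a
  have hsum := (((hu.pow 2).div_const 2).add (((hx.pow 2).const_mul (b * d)).div_const 2)).sub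
    ((hasDerivAt_log hx hxt).const_mul (a * c))
  refine hsum.congr_deriv ?_
  push_cast
  ring

theorem sq_mul_integral_sq_growthRate_le (hT : 0 ≤ T) (hf : Continuous f)
    (hx : ∀ t, HasDerivAt x (a * x t - b * x t * y t) t)
    (hy : ∀ t, HasDerivAt y (-c * y t + d * x t ^ 2 - f t) t)
    (hxper : Function.Periodic x T) (hyper : Function.Periodic y T) (hxpos : ∀ t, 0 < x t) :
    c ^ 2 * ∫ t in (0 : ℝ)..T, (a - b * y t) ^ 2 ≤ b ^ 2 * ∫ t in (0 : ℝ)..T, f t ^ 2 := by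
  have hyc : Continuous y := Differentiable.continuous fun t => (hy t).differentiableAt
  have hu : Continuous fun t => a - b * y t := by fun_prop
  have henergy := Function.Periodic.intervalIntegral_eq_zero_of_hasDerivAt
    (F := energy a b c d x y) (T := T) (fun t => by simp only [energy, hxper t, hyper t])
    (fun t => hasDerivAt_energy (hx t) (hy t) (hxpos t).ne')
    (Continuous.intervalIntegrable (by fun_prop) _ _)
  rw [intervalIntegral.integral_sub, intervalIntegral.integral_const_mul,
    intervalIntegral.integral_const_mul] at henergy
  any_goals exact Continuous.intervalIntegrable (by fun_prop) _ _
  set P := ∫ t in (0 : ℝ)..T, f t * (a - b * y t)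
  set U := ∫ t in (0 : ℝ)..T, (a - b * y t) ^ 2
  set F := ∫ t in (0 : ℝ)..T, f t ^ 2
  have hU : 0 ≤ U := integral_nonneg hT fun t _ => sq_nonneg _
  rcases hU.eq_or_lt with hU0 | hUpos
  · rw [← hU0, mul_zero]
    exact mul_nonneg (sq_nonneg b) (integral_nonneg hT fun t _ => sq_nonneg _)
  refine le_of_mul_le_mul_right ?_ hUpos
  calc c ^ 2 * U * U = b ^ 2 * P ^ 2 := by linear_combination -(c * U + b * P) * henergy
    _ ≤ b ^ 2 * (F * U) :=
        mul_le_mul_of_nonneg_left (sq_intervalIntegral_mul_le hT hf hu) (sq_nonneg b)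
    _ = b ^ 2 * F * U := by ring

theorem integral_abs_growthRate_le (hb : 0 ≤ b) (hc : 0 < c) (hT : 0 ≤ T) (hf : Continuous f)
    (hx : ∀ t, HasDerivAt x (a * x t - b * x t * y t) t)
    (hy : ∀ t, HasDerivAt y (-c * y t + d * x t ^ 2 - f t) t)
    (hxper : Function.Periodic x T) (hyper : Function.Periodic y T) (hxpos : ∀ t, 0 < x t) :
    ∫ t in (0 : ℝ)..T, |a - b * y t| ≤ √T * (b / c) * √(∫ t in (0 : ℝ)..T, f t ^ 2) := by
  have hyc : Continuous y := Differentiable.continuous fun t => (hy t).differentiableAt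
  set U := ∫ t in (0 : ℝ)..T, (a - b * y t) ^ 2
  set F := ∫ t in (0 : ℝ)..T, f t ^ 2
  have hL1 : (∫ t in (0 : ℝ)..T, |a - b * y t|) ^ 2 ≤ T * U := by
    simpa [sq_abs] using
      sq_intervalIntegral_mul_le hT (f := fun _ => (1 : ℝ)) continuous_const
        (continuous_const.sub (continuous_const.mul hyc)).abs
  have hL2 : U ≤ (b / c) ^ 2 * F := by
    rw [div_pow, div_mul_eq_mul_div, le_div_iff₀ (by positivity)]
    linarith [sq_mul_integral_sq_growthRate_le hT hf hx hy hxper hyper hxpos]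
  rw [← pow_le_pow_iff_left₀ (integral_nonneg hT fun t _ => abs_nonneg _) (by positivity)
    two_ne_zero]
  calc (∫ t in (0 : ℝ)..T, |a - b * y t|) ^ 2 ≤ T * U := hL1
    _ ≤ T * ((b / c) ^ 2 * F) := mul_le_mul_of_nonneg_left hL2 hT
    _ = (√T * (b / c) * √F) ^ 2 := by
        rw [mul_pow, mul_pow, sq_sqrt hT, sq_sqrt (integral_nonneg hT fun t _ => sq_nonneg _)]
        ring

theorem exists_eq_sqrt (hb : b ≠ 0) (hd : d ≠ 0) (hT : 0 < T) (hf : Continuous f)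
    (hfmean : ∫ t in (0 : ℝ)..T, f t = 0)
    (hx : ∀ t, HasDerivAt x (a * x t - b * x t * y t) t)
    (hy : ∀ t, HasDerivAt y (-c * y t + d * x t ^ 2 - f t) t)
    (hxper : Function.Periodic x T) (hyper : Function.Periodic y T) (hxpos : ∀ t, 0 < x t) :
    ∃ t, x t = √(a * c / (b * d)) := by
  have hxc : Continuous x := Differentiable.continuous fun t => (hx t).differentiableAt
  have hyc : Continuous y := Differentiable.continuous fun t => (hy t).differentiableAt
  have hgrowth := Function.Periodic.intervalIntegral_eq_zero_of_hasDerivAt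
    (F := fun t => log (x t)) (T := T) (fun t => by simp only [hxper t])
    (fun t => hasDerivAt_log (hx t) (hxpos t).ne')
    (Continuous.intervalIntegrable (by fun_prop) _ _)
  have hpredator := hyper.intervalIntegral_eq_zero_of_hasDerivAt hy
    (Continuous.intervalIntegrable (by fun_prop) _ _)
  rw [intervalIntegral.integral_sub, intervalIntegral.integral_const,
    intervalIntegral.integral_const_mul] at hgrowth
  rw [intervalIntegral.integral_sub, intervalIntegral.integral_add,
    intervalIntegral.integral_const_mul, intervalIntegral.integral_const_mul, hfmean] at hpredator
  any_goals exact Continuous.intervalIntegrable (by fun_prop) _ _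
  obtain ⟨t₀, -, ht₀⟩ := exists_eq_const_mul_intervalIntegral_of_nonneg (a := 0) (b := T)
    (μ := volume) (f := fun t => x t ^ 2) (g := fun _ => 1) (hxc.pow 2).continuousOn
    intervalIntegrable_const fun _ _ => zero_le_one
  simp only [mul_one, intervalIntegral.integral_const, sub_zero, smul_eq_mul] at ht₀ hgrowth
  refine ⟨t₀, ?_⟩
  rw [← sqrt_sq (hxpos t₀).le]
  congr 1
  rw [eq_div_iff (mul_ne_zero hb hd)]
  apply mul_right_cancel₀ hT.ne'
  linear_combination b * hpredator - c * hgrowth - b * d * ht₀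

end LotkaVolterra

theorem stmt6_general (a b c d T : ℝ) (hb : 0 < b) (hc : 0 < c) (hd : 0 < d)
    (hT : 0 < T) (f : ℝ → ℝ) (hf : Continuous f)
    (hfmean : ∫ t in (0 : ℝ)..T, f t = 0)
    (x y : ℝ → ℝ)
    (hx : ∀ t, HasDerivAt x (a * x t - b * x t * y t) t)
    (hy : ∀ t, HasDerivAt y (-c * y t + d * (x t) ^ 2 - f t) t)
    (hxper : Function.Periodic x T) (hyper : Function.Periodic y T)
    (hxpos : ∀ t, 0 < x t) :
    ∀ t,
      Real.sqrt (a * c / (b * d)) *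
          Real.exp (-(Real.sqrt T / 2) * (b / c) * Real.sqrt (∫ s in (0 : ℝ)..T, (f s) ^ 2))
        ≤ x t ∧
      x t ≤ Real.sqrt (a * c / (b * d)) *
          Real.exp ((Real.sqrt T / 2) * (b / c) * Real.sqrt (∫ s in (0 : ℝ)..T, (f s) ^ 2)) := by
  intro t
  obtain ⟨t₀, ht₀⟩ :=
    LotkaVolterra.exists_eq_sqrt hb.ne' hd.ne' hT hf hfmean hx hy hxper hyper hxpos
  have hyc : Continuous y := Differentiable.continuous fun s => (hy s).differentiableAt
  have hoscillation := Function.Periodic.two_mul_abs_sub_le_intervalIntegral_abs hT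
    (F := fun s => log (x s)) (fun s => by simp only [hxper s])
    (fun s => LotkaVolterra.hasDerivAt_log (hx s) (hxpos s).ne') (by fun_prop) t t₀
  have hvariation :=
    LotkaVolterra.integral_abs_growthRate_le hb.le hc hT.le hf hx hy hxper hyper hxpos
  rw [ht₀] at hoscillation
  simp only [neg_mul]
  exact mul_exp_neg_le_and_le_mul_exp_of_abs_log_sub_le (hxpos t) (ht₀ ▸ hxpos t₀)
    (by linarith)

theorem stmt6 (a b c d T : ℝ) (ha : 0 < a) (hb : 0 < b) (hc : 0 < c) (hd : 0 < d)
    (hT : 0 < T) (f : ℝ → ℝ) (hf : Continuous f) (hfper : Function.Periodic f T)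
    (hfmean : ∫ t in (0 : ℝ)..T, f t = 0)
    (x y : ℝ → ℝ)
    (hx : ∀ t, HasDerivAt x (a * x t - b * x t * y t) t)
    (hy : ∀ t, HasDerivAt y (-c * y t + d * (x t) ^ 2 - f t) t)
    (hxper : Function.Periodic x T) (hyper : Function.Periodic y T)
    (hxpos : ∀ t, 0 < x t) :
    ∀ t,
      Real.sqrt (a * c / (b * d)) *
          Real.exp (-(Real.sqrt T / 2) * (b / c) * Real.sqrt (∫ s in (0 : ℝ)..T, (f s) ^ 2))
        ≤ x t ∧
      x t ≤ Real.sqrt (a * c / (b * d)) *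
          Real.exp ((Real.sqrt T / 2) * (b / c) * Real.sqrt (∫ s in (0 : ℝ)..T, (f s) ^ 2)) :=
  stmt6_general a b c d T hb hc hd hT f hf hfmean x y hx hy hxper hyper hxpos
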